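/- Let G be a Δ-regular finite simple graph with 0 ≤ Δ ≤ 3, and let G* be any finite simple graph. If A(G*;x) = A(G;x) as polynomials, then G* is Δ-regular and has the same order, the same size, and the same number of connected components as G. -/

import Mathlib

/-!
The coefficient of `x^e` in `A(G;x)` is `A_{e-n}(G)`. The exact `(-Δ)`-alliances are the
singletons of maximum-degree vertices, so the lowest term of `A(G;x)` is `x^(n-Δ)` with
coefficient the number of such vertices. Hence `G*` has `n` vertices of maximum degree `Δ*` and
`n* - Δ* = n - Δ`, which gives `Δ ≤ Δ*`. If `Δ* = Δ`, then `G*` is `Δ`-regular of order `n`, and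
in a `Δ`-regular graph the exact `Δ`-alliances are exactly the connected components.

If `Δ* > Δ`, an exact `k`-alliance of `G*` yields an exact `(k + Δ* - Δ)`-alliance of `G`, so
`k ≤ K := 2Δ - Δ*` and `k ≡ Δ* (mod 2)`. The value of a component is its minimum degree, which
is positive for the component of a maximum-degree vertex, so `K ≥ 1`; and `K ≤ 2` as `Δ ≤ 3`. Parity of singletons then shows that
every non-isolated vertex has degree `≥ K` and `≠ K + 1`. For a maximum-degree vertex `x` not
adjacent to any vertex of degree `K`, the branch at `x` (the component of `G* - x` containing a
neighbour of `x`) is an exact `K`-alliance. Distinct such `x` give distinct branches, and no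
branch is a component. This gives `A_K(G*) ≥ n - 1`, whereas `A_K(G*) = A_Δ(G)` is the number of
components of `G`, which is at most `n / (Δ + 1) ≤ n / 3`.
-/

open Polynomial Finset

/-- Number of neighbors of `v` inside the set `S` (denoted δ_S(v)). -/
def SimpleGraph.degIn {V : Type*} [Fintype V] [DecidableEq V]
    (G : SimpleGraph V) [DecidableRel G.Adj] (S : Finset V) (v : V) : ℕ :=
  (S.filter (fun u => G.Adj v u)).card

/-- Number of neighbors of `v` outside the set `S` (denoted δ_{S̄}(v)). -/
def SimpleGraph.degOut {V : Type*} [Fintype V] [DecidableEq V]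
    (G : SimpleGraph V) [DecidableRel G.Adj] (S : Finset V) (v : V) : ℕ :=
  (Sᶜ.filter (fun u => G.Adj v u)).card

/-- `S` is an exact defensive `k`-alliance in `G`: the induced subgraph `⟨S⟩` is connected
(in particular `S` is nonempty) and `k = k_S = min_{v ∈ S} (δ_S(v) - δ_{S̄}(v))`. -/
def SimpleGraph.IsExactAlliance {V : Type*} [Fintype V] [DecidableEq V]
    (G : SimpleGraph V) [DecidableRel G.Adj] (S : Finset V) (k : ℤ) : Prop :=
  (G.induce (S : Set V)).Connected ∧
    (∀ v ∈ S, k ≤ (G.degIn S v : ℤ) - (G.degOut S v : ℤ)) ∧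
    (∃ v ∈ S, (G.degIn S v : ℤ) - (G.degOut S v : ℤ) = k)

/-- `A_k(G)`: the number of exact defensive `k`-alliances in `G`. -/
noncomputable def SimpleGraph.allianceCoeff {V : Type*} [Fintype V] [DecidableEq V]
    (G : SimpleGraph V) [DecidableRel G.Adj] (k : ℤ) : ℕ :=
  Set.ncard {S : Finset V | G.IsExactAlliance S k}

/-- The alliance polynomial `A(G;x) = Σ_{k=-Δ}^{Δ} A_k(G) x^{n+k}`, where `n` is the order and
`Δ` the maximum degree of `G`, regarded as a real polynomial. -/
noncomputable def SimpleGraph.alliancePoly {V : Type*} [Fintype V] [DecidableEq V]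
    (G : SimpleGraph V) [DecidableRel G.Adj] : Polynomial ℝ :=
  ∑ k ∈ Finset.Icc (-(G.maxDegree : ℤ)) (G.maxDegree : ℤ),
    (G.allianceCoeff k : ℝ) • X ^ (((Fintype.card V : ℤ) + k).toNat)

namespace SimpleGraph

variable {V : Type*} [Fintype V] {G : SimpleGraph V} [DecidableRel G.Adj]

theorem degree_pos_of_reachable {u v : V} (h : G.Reachable u v) (hv : 0 < G.degree v) :
    0 < G.degree u := by
  rcases eq_or_ne u v with rfl | hne
  exacts [hv, h.degree_pos_left hne]

theorem card_filter_degree_eq_maxDegree_pos [Nonempty V] : 0 < #{v | G.degree v = G.maxDegree} :=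
  card_pos.2 <| let ⟨v, hv⟩ := G.exists_maximal_degree_vertex; ⟨v, by simp [hv]⟩

theorem IsRegularOfDegree.two_mul_card_edgeFinset {d : ℕ} (hreg : G.IsRegularOfDegree d) :
    2 * #G.edgeFinset = Fintype.card V * d := by
  rw [← sum_degrees_eq_twice_card_edges, sum_const_nat fun v _ => hreg v, card_univ]

variable [DecidableEq V] {S : Finset V} {k : ℤ}

theorem degIn_add_degOut (S : Finset V) (v : V) : G.degIn S v + G.degOut S v = G.degree v := by
  rw [degIn, degOut, ← card_union_of_disjoint (disjoint_filter_filter disjoint_compl_right),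
    ← filter_union, union_compl, degree, neighborFinset_eq_filter]

theorem degIn_singleton_self (v : V) : G.degIn {v} v = 0 := by
  simp [degIn, filter_singleton]

theorem isExactAlliance_singleton (v : V) : G.IsExactAlliance {v} (-G.degree v) := by
  have hsum := G.degIn_add_degOut {v} v
  rw [degIn_singleton_self] at hsum
  refine ⟨?_, ?_, v, mem_singleton_self v, ?_⟩
  · rw [coe_singleton, induce_singleton_eq_top]
    exact connected_top
  · simp only [mem_singleton, forall_eq, degIn_singleton_self]
    omega
  · rw [degIn_singleton_self]
    omega

theorem eq_singleton_of_degIn_eq_zero (hS : (G.induce (S : Set V)).Connected) {v : V} (hv : v ∈ S)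
    (h0 : G.degIn S v = 0) : S = {v} := by
  refine eq_singleton_iff_unique_mem.2 ⟨hv, fun u hu => by_contra fun hne => ?_⟩
  obtain ⟨w, hw⟩ := (hS.preconnected ⟨v, hv⟩ ⟨u, hu⟩).nonempty_neighborSet_left
    (by simpa [Subtype.ext_iff] using Ne.symm hne)
  have : w.1 ∈ S.filter (G.Adj v) := mem_filter.2 ⟨w.2, hw⟩
  simp_all [degIn]

namespace IsExactAlliance

theorem exists_eq_two_mul_degIn_sub_degree (h : G.IsExactAlliance S k) :
    ∃ v ∈ S, k = 2 * (G.degIn S v : ℤ) - G.degree v := by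
  obtain ⟨v, hv, rfl⟩ := h.2.2
  exact ⟨v, hv, by have := G.degIn_add_degOut S v; omega⟩

theorem exists_le_degree_and_even (h : G.IsExactAlliance S k) :
    ∃ v, -(G.degree v : ℤ) ≤ k ∧ k ≤ G.degree v ∧ Even (k + G.degree v) := by
  obtain ⟨v, hv, rfl⟩ := h.exists_eq_two_mul_degIn_sub_degree
  have := G.degIn_add_degOut S v
  exact ⟨v, by omega, by omega, ⟨G.degIn S v, by ring⟩⟩

theorem le_maxDegree (h : G.IsExactAlliance S k) : k ≤ G.maxDegree := by
  obtain ⟨v, -, hk, -⟩ := h.exists_le_degree_and_even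
  exact hk.trans (by exact_mod_cast G.degree_le_maxDegree v)

theorem neg_maxDegree_le (h : G.IsExactAlliance S k) : -(G.maxDegree : ℤ) ≤ k := by
  obtain ⟨v, hk, -⟩ := h.exists_le_degree_and_even
  exact le_trans (by simpa using G.degree_le_maxDegree v) hk

theorem neg_card_lt (h : G.IsExactAlliance S k) : -(Fintype.card V : ℤ) < k := by
  obtain ⟨v, hk, -⟩ := h.exists_le_degree_and_even
  exact lt_of_lt_of_le (by simpa using G.degree_lt_card_verts v) hk

theorem exists_eq_singleton_of_neg_maxDegree (h : G.IsExactAlliance S (-G.maxDegree)) :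
    ∃ v, G.degree v = G.maxDegree ∧ S = {v} := by
  obtain ⟨v, hv, hk⟩ := h.exists_eq_two_mul_degIn_sub_degree
  have := G.degree_le_maxDegree v
  have := G.degIn_add_degOut S v
  exact ⟨v, by omega, eq_singleton_of_degIn_eq_zero h.1 hv (by omega)⟩

end IsExactAlliance

theorem allianceCoeff_pos_iff : 0 < G.allianceCoeff k ↔ ∃ S, G.IsExactAlliance S k :=
  Set.ncard_pos (Set.toFinite _)

theorem allianceCoeff_eq_zero_iff : G.allianceCoeff k = 0 ↔ ∀ S, ¬ G.IsExactAlliance S k := by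
  simp [← Nat.le_zero, ← not_lt, allianceCoeff_pos_iff]

theorem card_le_allianceCoeff {T : Finset (Finset V)} (hT : ∀ S ∈ T, G.IsExactAlliance S k) :
    T.card ≤ G.allianceCoeff k := by
  rw [allianceCoeff, ← Set.ncard_coe_finset]
  exact Set.ncard_le_ncard hT (Set.toFinite _)

theorem allianceCoeff_neg_maxDegree :
    G.allianceCoeff (-G.maxDegree) = #{v | G.degree v = G.maxDegree} := by
  have hset : {S : Finset V | G.IsExactAlliance S (-G.maxDegree)} =
      (fun v => ({v} : Finset V)) '' ↑(univ.filter fun v => G.degree v = G.maxDegree) := by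
    ext S
    constructor
    · intro hS
      obtain ⟨v, hv, rfl⟩ := IsExactAlliance.exists_eq_singleton_of_neg_maxDegree hS
      exact ⟨v, by simpa using hv, rfl⟩
    · rintro ⟨v, hv, rfl⟩
      simpa [(mem_filter.1 hv).2] using G.isExactAlliance_singleton v
  rw [allianceCoeff, hset, Set.ncard_image_of_injective _ singleton_injective,
    Set.ncard_coe_finset]

theorem coeff_alliancePoly (e : ℕ) :
    G.alliancePoly.coeff e = G.allianceCoeff (e - Fintype.card V) := by
  rw [alliancePoly, finsetSum_coeff]
  simp only [coeff_smul, coeff_X_pow, smul_eq_mul, mul_ite, mul_one, mul_zero]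
  rw [sum_eq_single ((e : ℤ) - Fintype.card V)]
  · simp
  · intro k _ hk
    rcases (G.allianceCoeff k).eq_zero_or_pos with h0 | hpos
    · simp [h0]
    · obtain ⟨S, hS⟩ := allianceCoeff_pos_iff.1 hpos
      have := hS.neg_card_lt
      rw [if_neg (by omega)]
  · intro hk
    rw [allianceCoeff_eq_zero_iff.2 fun S hS =>
      hk (mem_Icc.2 ⟨hS.neg_maxDegree_le, hS.le_maxDegree⟩)]
    simp

theorem coeff_alliancePoly_eq_zero_of_lt {e : ℕ} (he : e < Fintype.card V - G.maxDegree) :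
    G.alliancePoly.coeff e = 0 := by
  rw [coeff_alliancePoly, allianceCoeff_eq_zero_iff.2 fun S hS => ?_, Nat.cast_zero]
  have := hS.neg_maxDegree_le
  omega

theorem coeff_alliancePoly_card_sub_maxDegree [Nonempty V] :
    G.alliancePoly.coeff (Fintype.card V - G.maxDegree) = #{v | G.degree v = G.maxDegree} := by
  rw [coeff_alliancePoly, Nat.cast_sub G.maxDegree_lt_card_verts.le, sub_sub_cancel_left,
    allianceCoeff_neg_maxDegree]

theorem natTrailingDegree_alliancePoly [Nonempty V] :
    G.alliancePoly.natTrailingDegree = Fintype.card V - G.maxDegree := by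
  have hne : G.alliancePoly.coeff (Fintype.card V - G.maxDegree) ≠ 0 := by
    rw [coeff_alliancePoly_card_sub_maxDegree]
    exact_mod_cast card_filter_degree_eq_maxDegree_pos.ne'
  exact le_antisymm (natTrailingDegree_le_of_ne_zero hne)
    (le_natTrailingDegree (fun h => hne (by simp [h])) fun e he =>
      coeff_alliancePoly_eq_zero_of_lt he)

theorem trailingCoeff_alliancePoly [Nonempty V] :
    G.alliancePoly.trailingCoeff = #{v | G.degree v = G.maxDegree} := by
  rw [trailingCoeff, natTrailingDegree_alliancePoly, coeff_alliancePoly_card_sub_maxDegree]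

theorem alliancePoly_eq_zero_iff : G.alliancePoly = 0 ↔ IsEmpty V := by
  refine ⟨fun h => not_nonempty_iff.1 fun _ => ?_, fun _ => ?_⟩
  · have := congrArg trailingCoeff h
    rw [trailingCoeff_alliancePoly, trailingCoeff_zero] at this
    exact card_filter_degree_eq_maxDegree_pos.ne' (by exact_mod_cast this)
  · ext e
    rw [coeff_alliancePoly, allianceCoeff_eq_zero_iff.2 fun S hS => isEmptyElim hS.2.2.choose]
    simp

theorem isExactAlliance_of_forall_le (hS : (G.induce (S : Set V)).Connected)
    (hle : ∀ k', G.IsExactAlliance S k' → k' ≤ k)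
    (hge : ∀ v ∈ S, k ≤ (G.degIn S v : ℤ) - G.degOut S v) : G.IsExactAlliance S k := by
  obtain ⟨⟨w, hw⟩⟩ := hS.nonempty
  obtain ⟨v, hv, hmin⟩ := S.exists_min_image (fun v => (G.degIn S v : ℤ) - G.degOut S v) ⟨w, hw⟩
  exact ⟨hS, hge, v, hv, le_antisymm (hle _ ⟨hS, hmin, v, hv, rfl⟩) (hge v hv)⟩

namespace ConnectedComponent

theorem degOut_supp_toFinset_eq_zero {c : G.ConnectedComponent} {v : V} (hv : v ∈ c.supp) :
    G.degOut c.supp.toFinset v = 0 := by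
  rw [degOut, card_eq_zero, filter_eq_empty_iff]
  intro w hw hadj
  exact (mem_compl.1 hw) (Set.mem_toFinset.2 ((c.mem_supp_congr_adj hadj).1 hv))

theorem isExactAlliance_supp_toFinset_iff (c : G.ConnectedComponent) :
    G.IsExactAlliance c.supp.toFinset k ↔
      (∀ v ∈ c.supp, k ≤ G.degree v) ∧ ∃ v ∈ c.supp, G.degree v = k := by
  have hval : ∀ v ∈ c.supp, (G.degIn c.supp.toFinset v : ℤ) - G.degOut c.supp.toFinset v =
      G.degree v := fun v hv => by
    have := G.degIn_add_degOut c.supp.toFinset v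
    have := degOut_supp_toFinset_eq_zero hv
    omega
  simp only [IsExactAlliance, Set.mem_toFinset]
  constructor
  · rintro ⟨-, hle, v, hv, hk⟩
    exact ⟨fun u hu => hval u hu ▸ hle u hu, v, hv, hval v hv ▸ hk⟩
  · rintro ⟨hle, v, hv, hk⟩
    refine ⟨?_, fun u hu => (hval u hu).symm ▸ hle u hu, v, hv, (hval v hv).trans hk⟩
    rw [Set.coe_toFinset]
    exact c.connected_toSimpleGraph

theorem exists_isExactAlliance_supp_toFinset (c : G.ConnectedComponent) :
    ∃ v ∈ c.supp, G.IsExactAlliance c.supp.toFinset (G.degree v) := by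
  obtain ⟨v, hv, hmin⟩ := c.supp.toFinset.exists_min_image (fun v => G.degree v)
    (Set.toFinset_nonempty.2 c.nonempty_supp)
  rw [Set.mem_toFinset] at hv
  exact ⟨v, hv, c.isExactAlliance_supp_toFinset_iff.2
    ⟨fun u hu => by exact_mod_cast hmin u (Set.mem_toFinset.2 hu), v, hv, rfl⟩⟩

end ConnectedComponent

namespace IsRegularOfDegree

variable {d : ℕ}

theorem even_add_of_isExactAlliance (hreg : G.IsRegularOfDegree d) (h : G.IsExactAlliance S k) :
    Even (k + d) := by
  obtain ⟨v, -, -, hev⟩ := h.exists_le_degree_and_even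
  rwa [hreg v] at hev

theorem isExactAlliance_iff (hreg : G.IsRegularOfDegree d) :
    G.IsExactAlliance S d ↔ ∃ c : G.ConnectedComponent, S = c.supp.toFinset := by
  refine ⟨fun h => ?_, ?_⟩
  · have hclosed : ∀ ⦃v w⦄, v ∈ S → G.Adj v w → w ∈ S := fun v w hv hadj => by
      by_contra hw
      have hpos : 0 < G.degOut S v := card_pos.2 ⟨w, mem_filter.2 ⟨mem_compl.2 hw, hadj⟩⟩
      have := h.2.1 v hv
      have := G.degIn_add_degOut S v
      rw [hreg v] at this
      omega
    obtain ⟨⟨v, hv⟩⟩ := h.1.nonempty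
    refine ⟨G.connectedComponentMk v, Finset.ext fun u => ?_⟩
    rw [Set.mem_toFinset, ConnectedComponent.mem_supp_iff, ConnectedComponent.eq]
    refine ⟨fun hu => ((h.1.preconnected ⟨u, hu⟩ ⟨v, hv⟩).map (Embedding.induce _).toHom), ?_⟩
    intro hr
    obtain ⟨p⟩ := hr.symm
    clear hr
    induction p with
    | nil => exact hv
    | cons hadj _ ih => exact ih (hclosed hv hadj)
  · rintro ⟨c, rfl⟩
    obtain ⟨v, hv⟩ := c.nonempty_supp
    exact c.isExactAlliance_supp_toFinset_iff.2 ⟨fun u _ => by rw [hreg u], v, hv, by rw [hreg v]⟩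

theorem allianceCoeff_eq_card_connectedComponent (hreg : G.IsRegularOfDegree d) :
    G.allianceCoeff d = Nat.card G.ConnectedComponent := by
  have hinj : Function.Injective fun c : G.ConnectedComponent => c.supp.toFinset :=
    fun c c' h => ConnectedComponent.supp_injective (Set.toFinset_inj.1 h)
  rw [allianceCoeff, ← Set.ncard_range_of_injective hinj]
  congr 1
  ext S
  simp [hreg.isExactAlliance_iff, eq_comm]

theorem succ_mul_card_connectedComponent_le (hreg : G.IsRegularOfDegree d) :
    (d + 1) * Nat.card G.ConnectedComponent ≤ Fintype.card V := by
  classical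
  rw [Nat.card_eq_fintype_card, ← card_univ, ← card_univ, mul_comm, ← smul_eq_mul, ← sum_const,
    card_eq_sum_card_fiberwise (f := G.connectedComponentMk) (t := univ) fun _ _ => mem_univ _]
  refine sum_le_sum fun c _ => ?_
  refine c.ind fun v => ?_
  calc d + 1 = #(insert v (G.neighborFinset v)) := by
        rw [card_insert_of_notMem (by simp), card_neighborFinset_eq_degree, hreg v]
    _ ≤ _ := card_le_card fun u hu => by
        rcases mem_insert.1 hu with rfl | hu
        · simp
        · simpa [ConnectedComponent.eq] using ((G.mem_neighborFinset v u).1 hu).reachable.symm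

end IsRegularOfDegree

section Branch

variable {x y u w : V}

variable (G) in
def branch (x y : V) : Finset V :=
  ((G.deleteIncidenceSet x).connectedComponentMk y).supp.toFinset

theorem reachable_of_mem_branch (hu : u ∈ G.branch x y) :
    (G.deleteIncidenceSet x).Reachable y u := by
  simpa [branch, ConnectedComponent.eq, reachable_comm] using hu

theorem mem_branch_self : y ∈ G.branch x y := by
  simp [branch]

theorem notMem_branch (hxy : x ≠ y) : x ∉ G.branch x y := fun hx => by
  obtain ⟨_, hw⟩ := (reachable_of_mem_branch hx).nonempty_neighborSet_right hxy.symm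
  simp [deleteIncidenceSet_adj] at hw

theorem connected_induce_branch (hxy : x ≠ y) : (G.induce (G.branch x y : Set V)).Connected := by
  rw [← G.induce_deleteIncidenceSet_of_notMem (notMem_branch hxy), branch, Set.coe_toFinset]
  exact ConnectedComponent.connected_toSimpleGraph _

theorem eq_of_adj_of_mem_branch (hxy : x ≠ y) (hu : u ∈ G.branch x y) (huw : G.Adj u w)
    (hw : w ∉ G.branch x y) : w = x := by
  by_contra hwx
  have hux : u ≠ x := by rintro rfl; exact notMem_branch hxy hu
  have hadj : (G.deleteIncidenceSet x).Adj u w := deleteIncidenceSet_adj.2 ⟨huw, hux, hwx⟩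
  simp only [branch, Set.mem_toFinset] at hu hw
  exact hw ((ConnectedComponent.mem_supp_congr_adj _ hadj).1 hu)

theorem degOut_branch_le_one (hxy : x ≠ y) (hu : u ∈ G.branch x y) :
    G.degOut (G.branch x y) u ≤ 1 :=
  card_le_one.2 fun _ hw _ hw' => by
    simp only [mem_filter, mem_compl] at hw hw'
    rw [eq_of_adj_of_mem_branch hxy hu hw.2 hw.1, eq_of_adj_of_mem_branch hxy hu hw'.2 hw'.1]

theorem degOut_branch_eq_zero (hxy : x ≠ y) (hu : u ∈ G.branch x y) (hux : ¬ G.Adj u x) :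
    G.degOut (G.branch x y) u = 0 :=
  card_eq_zero.2 <| filter_eq_empty_iff.2 fun _ hw huw =>
    hux (eq_of_adj_of_mem_branch hxy hu huw (mem_compl.1 hw) ▸ huw)

theorem isExactAlliance_branch {K : ℤ} (hxy : x ≠ y)
    (hle : ∀ k, G.IsExactAlliance (G.branch x y) k → k ≤ K)
    (hdeg : ∀ u ∈ G.branch x y, K ≤ G.degree u ∧ (G.Adj u x → K + 2 ≤ G.degree u)) :
    G.IsExactAlliance (G.branch x y) K := by
  refine isExactAlliance_of_forall_le (connected_induce_branch hxy) hle fun u hu => ?_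
  have hsum := G.degIn_add_degOut (G.branch x y) u
  by_cases hux : G.Adj u x
  · have := degOut_branch_le_one hxy hu
    have := (hdeg u hu).2 hux
    omega
  · have := degOut_branch_eq_zero hxy hu hux
    have := (hdeg u hu).1
    omega

theorem eq_of_branch_eq {x' y' : V} (hxy : G.Adj x y) (hxy' : G.Adj x' y')
    (h : G.branch x y = G.branch x' y') : x = x' :=
  eq_of_adj_of_mem_branch hxy'.ne (h ▸ mem_branch_self) hxy.symm (h ▸ notMem_branch hxy.ne)

theorem branch_ne_supp_toFinset (hxy : G.Adj x y) (c : G.ConnectedComponent) :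
    G.branch x y ≠ c.supp.toFinset := fun h => by
  have hy : y ∈ c.supp := Set.mem_toFinset.1 (h ▸ mem_branch_self)
  exact notMem_branch hxy.ne (h ▸ Set.mem_toFinset.2 ((c.mem_supp_congr_adj hxy.symm).1 hy))

end Branch

theorem card_add_one_le_allianceCoeff {K : ℕ}
    (hle : ∀ (S : Finset V) (k : ℤ), G.IsExactAlliance S k → k ≤ K)
    (hdeg : ∀ v, 0 < G.degree v → K ≤ G.degree v ∧ G.degree v ≠ K + 1)
    {X : Finset V} (hX : ∀ x ∈ X, 0 < G.degree x ∧ ∀ u, G.Adj x u → G.degree u ≠ K)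
    {x₀ : V} (hx₀ : 0 < G.degree x₀) : #X + 1 ≤ G.allianceCoeff K := by
  have : ∀ x ∈ X, ∃ y, G.Adj x y := fun x hx => (G.degree_pos_iff_exists_adj x).1 (hX x hx).1
  choose! nb hnb using this
  set C := (G.connectedComponentMk x₀).supp.toFinset
  have hC : G.IsExactAlliance C K := by
    obtain ⟨v, hv, hCv⟩ := (G.connectedComponentMk x₀).exists_isExactAlliance_supp_toFinset
    have := hle _ _ hCv
    have := (hdeg v (degree_pos_of_reachable (ConnectedComponent.exact hv) hx₀)).1
    rwa [show (K : ℤ) = G.degree v by omega]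
  have hB : ∀ x ∈ X, G.IsExactAlliance (G.branch x (nb x)) K := fun x hx => by
    refine isExactAlliance_branch (hnb x hx).ne (hle _) fun u hu => ?_
    have hpos : 0 < G.degree u := degree_pos_of_reachable
      (((reachable_of_mem_branch hu).mono (G.deleteIncidenceSet_le x)).symm.trans
        (hnb x hx).symm.reachable) (hX x hx).1
    have hK := hdeg u hpos
    refine ⟨by exact_mod_cast hK.1, fun hux => ?_⟩
    have := (hX x hx).2 u hux.symm
    omega
  have hinj : Set.InjOn (fun x => G.branch x (nb x)) X := fun x hx x' hx' h =>
    eq_of_branch_eq (hnb x hx) (hnb x' hx') h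
  have hCnotMem : C ∉ X.image fun x => G.branch x (nb x) := by
    simp only [mem_image, not_exists, not_and]
    exact fun x hx => branch_ne_supp_toFinset (hnb x hx) _
  calc #X + 1 = #(insert C (X.image fun x => G.branch x (nb x))) := by
        rw [card_insert_of_notMem hCnotMem, card_image_of_injOn hinj]
    _ ≤ G.allianceCoeff K := card_le_allianceCoeff <| by
        simpa only [mem_insert, mem_image, forall_eq_or_imp, forall_exists_index, and_imp,
          forall_apply_eq_imp_iff₂] using ⟨hC, hB⟩

theorem card_le_card_filter_forall_adj_degree_ne_add (M : Finset V) (K : ℕ) :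
    #M ≤ #(M.filter fun x => ∀ u, G.Adj x u → G.degree u ≠ K) + K * #{u | G.degree u = K} := by
  calc #M ≤ #(M.filter (fun x => ∀ u, G.Adj x u → G.degree u ≠ K) ∪
        ({u | G.degree u = K} : Finset V).biUnion fun u => G.neighborFinset u) :=
        card_le_card fun x hx => by
          by_cases hxK : ∀ u, G.Adj x u → G.degree u ≠ K
          · exact mem_union_left _ (mem_filter.2 ⟨hx, hxK⟩)
          · push Not at hxK
            obtain ⟨u, hxu, hu⟩ := hxK
            exact mem_union_right _ (mem_biUnion.2 ⟨u, by simpa using hu, by simpa using hxu.symm⟩)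
    _ ≤ _ := card_union_le _ _
    _ ≤ _ := by
        rw [mul_comm]
        exact add_le_add le_rfl (card_biUnion_le_card_mul _ _ _ fun u hu =>
          ((G.card_neighborFinset_eq_degree u).trans (mem_filter.1 hu).2).le)

theorem card_add_one_le_allianceCoeff_add_mul {K : ℕ}
    (hle : ∀ (S : Finset V) (k : ℤ), G.IsExactAlliance S k → k ≤ K)
    (hdeg : ∀ v, 0 < G.degree v → K ≤ G.degree v ∧ G.degree v ≠ K + 1)
    {M : Finset V} (hM : ∀ x ∈ M, 0 < G.degree x) (hMne : M.Nonempty) :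
    #M + 1 ≤ G.allianceCoeff K + K * #{u | G.degree u = K} := by
  obtain ⟨x₀, hx₀⟩ := hMne
  have := card_add_one_le_allianceCoeff hle hdeg
    (X := M.filter fun x => ∀ u, G.Adj x u → G.degree u ≠ K)
    (fun x hx => ⟨hM x (mem_filter.1 hx).1, (mem_filter.1 hx).2⟩) (hM x₀ hx₀)
  have := G.card_le_card_filter_forall_adj_degree_ne_add M K
  omega

section AlliancePolyEq

variable {W : Type*} [Fintype W] [DecidableEq W] {H : SimpleGraph W} [DecidableRel H.Adj]

theorem isEmpty_iff_of_alliancePoly_eq (h : H.alliancePoly = G.alliancePoly) :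
    IsEmpty W ↔ IsEmpty V := by
  rw [← alliancePoly_eq_zero_iff (G := H), ← alliancePoly_eq_zero_iff (G := G), h]

theorem card_add_maxDegree_eq_of_alliancePoly_eq [Nonempty V] [Nonempty W]
    (h : H.alliancePoly = G.alliancePoly) :
    Fintype.card W + G.maxDegree = Fintype.card V + H.maxDegree := by
  have := congrArg natTrailingDegree h
  rw [natTrailingDegree_alliancePoly, natTrailingDegree_alliancePoly] at this
  have := H.maxDegree_lt_card_verts
  have := G.maxDegree_lt_card_verts
  omega

theorem card_filter_degree_eq_maxDegree_eq_of_alliancePoly_eq [Nonempty V] [Nonempty W]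
    (h : H.alliancePoly = G.alliancePoly) :
    #{v | H.degree v = H.maxDegree} = #{v | G.degree v = G.maxDegree} := by
  have := congrArg trailingCoeff h
  rwa [trailingCoeff_alliancePoly, trailingCoeff_alliancePoly, Nat.cast_inj] at this

theorem allianceCoeff_eq_of_alliancePoly_eq (h : H.alliancePoly = G.alliancePoly)
    (hk : -(Fintype.card W : ℤ) ≤ k) :
    H.allianceCoeff k = G.allianceCoeff (k + Fintype.card W - Fintype.card V) := by
  have := congrArg (coeff · (Fintype.card W + k).toNat) h
  simp only [coeff_alliancePoly, Int.toNat_of_nonneg (by omega : (0 : ℤ) ≤ Fintype.card W + k),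
    Nat.cast_inj] at this
  convert this using 2 <;> ring

theorem IsExactAlliance.exists_of_alliancePoly_eq (h : H.alliancePoly = G.alliancePoly)
    {T : Finset W} (hT : H.IsExactAlliance T k) :
    ∃ S : Finset V, G.IsExactAlliance S (k + Fintype.card W - Fintype.card V) :=
  allianceCoeff_pos_iff.1 <| allianceCoeff_eq_of_alliancePoly_eq h hT.neg_card_lt.le ▸
    allianceCoeff_pos_iff.2 ⟨T, hT⟩

variable [Nonempty V] [Nonempty W] {Δ : ℕ}

namespace IsRegularOfDegree

theorem card_filter_degree_eq_maxDegree_of_alliancePoly_eq (hreg : G.IsRegularOfDegree Δ)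
    (h : H.alliancePoly = G.alliancePoly) : #{v | H.degree v = H.maxDegree} = Fintype.card V := by
  rw [card_filter_degree_eq_maxDegree_eq_of_alliancePoly_eq h,
    filter_true_of_mem fun v _ => (hreg v).trans hreg.maxDegree_eq.symm, card_univ]

theorem le_maxDegree_of_alliancePoly_eq (hreg : G.IsRegularOfDegree Δ)
    (h : H.alliancePoly = G.alliancePoly) : Δ ≤ H.maxDegree := by
  have := hreg.card_filter_degree_eq_maxDegree_of_alliancePoly_eq h
  have := card_le_univ ({v | H.degree v = H.maxDegree} : Finset W)
  have := card_add_maxDegree_eq_of_alliancePoly_eq h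
  rw [hreg.maxDegree_eq] at this
  omega

theorem card_filter_degree_ne_maxDegree_of_alliancePoly_eq (hreg : G.IsRegularOfDegree Δ)
    (h : H.alliancePoly = G.alliancePoly) : #{v | H.degree v ≠ H.maxDegree} = H.maxDegree - Δ := by
  have hsplit : #{v | H.degree v = H.maxDegree} + #{v | H.degree v ≠ H.maxDegree} =
      Fintype.card W := card_filter_add_card_filter_not _
  have hcard := card_add_maxDegree_eq_of_alliancePoly_eq h
  rw [hreg.card_filter_degree_eq_maxDegree_of_alliancePoly_eq h] at hsplit
  rw [hreg.maxDegree_eq] at hcard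
  omega

theorem add_maxDegree_le_and_even_of_alliancePoly_eq (hreg : G.IsRegularOfDegree Δ)
    (h : H.alliancePoly = G.alliancePoly) {T : Finset W} (hT : H.IsExactAlliance T k) :
    k + H.maxDegree ≤ 2 * Δ ∧ Even (k + H.maxDegree) := by
  obtain ⟨S, hS⟩ := hT.exists_of_alliancePoly_eq h
  have hcard := card_add_maxDegree_eq_of_alliancePoly_eq h
  rw [hreg.maxDegree_eq] at hcard
  rw [show k + Fintype.card W - Fintype.card V = k + H.maxDegree - Δ by omega] at hS
  obtain ⟨v, -, hle, hev⟩ := hS.exists_le_degree_and_even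
  rw [hreg v] at hle hev
  exact ⟨by omega, by simpa using hev⟩

theorem maxDegree_lt_two_mul_of_alliancePoly_eq (hreg : G.IsRegularOfDegree Δ)
    (h : H.alliancePoly = G.alliancePoly) (hpos : 0 < H.maxDegree) : H.maxDegree < 2 * Δ := by
  obtain ⟨x₀, hx₀⟩ := H.exists_maximal_degree_vertex
  obtain ⟨v, hv, hCv⟩ := (H.connectedComponentMk x₀).exists_isExactAlliance_supp_toFinset
  have := degree_pos_of_reachable (ConnectedComponent.exact hv) (hx₀ ▸ hpos)
  have := (hreg.add_maxDegree_le_and_even_of_alliancePoly_eq h hCv).1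
  omega

theorem maxDegree_le_of_alliancePoly_eq (hreg : G.IsRegularOfDegree Δ) (hΔ : Δ ≤ 3)
    (h : H.alliancePoly = G.alliancePoly) : H.maxDegree ≤ Δ := by
  by_contra! hlt
  have hshift := fun T k (hT : H.IsExactAlliance T k) =>
    hreg.add_maxDegree_le_and_even_of_alliancePoly_eq h hT
  have hcard := card_add_maxDegree_eq_of_alliancePoly_eq h
  rw [hreg.maxDegree_eq] at hcard
  have hM := hreg.card_filter_degree_eq_maxDegree_of_alliancePoly_eq h
  have hlt₂ := hreg.maxDegree_lt_two_mul_of_alliancePoly_eq h (by omega)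
  obtain ⟨K, hK⟩ : ∃ K, K = 2 * Δ - H.maxDegree := ⟨_, rfl⟩
  have hle : ∀ T k, H.IsExactAlliance T k → k ≤ K := fun T k hT => by
    have := (hshift T k hT).1
    omega
  -- `{v}` is an exact `(-deg v)`-alliance, so `deg v ≡ Δ* ≡ K (mod 2)`
  have hdeg : ∀ v, 0 < H.degree v → K ≤ H.degree v ∧ H.degree v ≠ K + 1 := fun v hv => by
    obtain ⟨r, hr⟩ := (hshift _ _ (H.isExactAlliance_singleton v)).2
    omega
  have hlow : #{u | H.degree u = K} ≤ H.maxDegree - Δ :=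
    (card_le_card (monotone_filter_right _ fun u _ (hu : H.degree u = K) => by omega)).trans_eq
      (hreg.card_filter_degree_ne_maxDegree_of_alliancePoly_eq h)
  have hcount := H.card_add_one_le_allianceCoeff_add_mul hle hdeg
    (M := {v | H.degree v = H.maxDegree}) (fun x hx => by rw [(mem_filter.1 hx).2]; omega)
    (card_pos.1 card_filter_degree_eq_maxDegree_pos)
  have hKc : H.allianceCoeff K = Nat.card G.ConnectedComponent := by
    rw [allianceCoeff_eq_of_alliancePoly_eq h (by omega),
      ← hreg.allianceCoeff_eq_card_connectedComponent]
    congr 1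
    omega
  have hc := (Nat.mul_le_mul_right (Nat.card G.ConnectedComponent) (show 3 ≤ Δ + 1 by omega)).trans
    hreg.succ_mul_card_connectedComponent_le
  have hc₀ : 0 < Nat.card G.ConnectedComponent := Nat.card_pos
  -- `K * #{u | deg u = K} ≤ K * (Δ* - Δ) ≤ 2`, as `K + (Δ* - Δ) = Δ ≤ 3`
  obtain rfl | rfl : K = 1 ∨ K = 2 := by omega
  all_goals omega

end IsRegularOfDegree

end AlliancePolyEq

end SimpleGraph

/-- If `G` is Δ-regular with `0 ≤ Δ ≤ 3` and `G*` has the same alliance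
polynomial, then `G*` is Δ-regular with the same order, size and number of connected
components as `G`. -/
theorem alliancePoly_determines_regular_small_degree
    {V W : Type*} [Fintype V] [DecidableEq V] [Fintype W] [DecidableEq W]
    (G : SimpleGraph V) [DecidableRel G.Adj] (Δ : ℕ) (hΔ : Δ ≤ 3)
    (hreg : G.IsRegularOfDegree Δ)
    (Gs : SimpleGraph W) [DecidableRel Gs.Adj]
    (h : Gs.alliancePoly = G.alliancePoly) :
    Gs.IsRegularOfDegree Δ ∧
    Fintype.card W = Fintype.card V ∧
    Gs.edgeFinset.card = G.edgeFinset.card ∧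
    Nat.card Gs.ConnectedComponent = Nat.card G.ConnectedComponent := by
  rcases isEmpty_or_nonempty V with hV | hV
  · have := (SimpleGraph.isEmpty_iff_of_alliancePoly_eq h).2 hV
    refine ⟨.of_isEmpty, by simp, ?_, by simp⟩
    rw [eq_empty_of_isEmpty Gs.edgeFinset, eq_empty_of_isEmpty G.edgeFinset, card_empty, card_empty]
  have : Nonempty W := not_isEmpty_iff.1 fun hW =>
    ((SimpleGraph.isEmpty_iff_of_alliancePoly_eq h).1 hW).false hV.some
  have hmax : Gs.maxDegree = Δ :=
    (hreg.maxDegree_le_of_alliancePoly_eq hΔ h).antisymm (hreg.le_maxDegree_of_alliancePoly_eq h)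
  have hcard : Fintype.card W = Fintype.card V := by
    have := SimpleGraph.card_add_maxDegree_eq_of_alliancePoly_eq h
    rw [hmax, hreg.maxDegree_eq] at this
    omega
  have hregs : Gs.IsRegularOfDegree Δ := by
    have := hreg.card_filter_degree_eq_maxDegree_of_alliancePoly_eq h
    rw [hmax, ← hcard, ← card_univ, card_filter_eq_iff] at this
    exact fun v => this v (mem_univ v)
  refine ⟨hregs, hcard, ?_, ?_⟩
  · have := hregs.two_mul_card_edgeFinset
    rw [hcard, ← hreg.two_mul_card_edgeFinset] at this
    omega
  · rw [← hregs.allianceCoeff_eq_card_connectedComponent,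
      ← hreg.allianceCoeff_eq_card_connectedComponent,
      SimpleGraph.allianceCoeff_eq_of_alliancePoly_eq h (by omega), hcard, add_sub_cancel_right]
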